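/- Let G be a finite simple graph with vertex set V. For every vertex v: the sum over all neighbors a of v of binomial(n2e(v,a), 2) equals F6(v) + F8(v). -/
import Mathlib


open Finset
open scoped Classical

namespace FourProfiles

variable {V : Type*} [Fintype V] [DecidableEq V]

/-- Number of 3-element subsets of `V \ {v}` admitting a labeling `a, b, c` satisfying `P`. -/
noncomputable def cnt3 (v : V) (P : V → V → V → Prop) : ℕ :=
  (((Finset.univ : Finset V).powersetCard 3).filter
    (fun s => v ∉ s ∧ ∃ a ∈ s, ∃ b ∈ s, ∃ c ∈ s, s = {a, b, c} ∧ P a b c)).card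

variable (G : SimpleGraph V)

/-- Induced subgraph on `{v,a,b,c}` has exactly one edge, with `v` an endpoint. -/
noncomputable def F1 (v : V) : ℕ := cnt3 v fun a b c =>
  G.Adj v a ∧ ¬G.Adj v b ∧ ¬G.Adj v c ∧ ¬G.Adj a b ∧ ¬G.Adj a c ∧ ¬G.Adj b c

/-- Induced subgraph on `{v,a,b,c}` is a perfect matching (two disjoint edges). -/
noncomputable def F2 (v : V) : ℕ := cnt3 v fun a b c =>
  G.Adj v a ∧ G.Adj b c ∧ ¬G.Adj v b ∧ ¬G.Adj v c ∧ ¬G.Adj a b ∧ ¬G.Adj a c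

/-- Two-edge path plus isolated vertex, `v` an endpoint of the path. -/
noncomputable def F3 (v : V) : ℕ := cnt3 v fun a b c =>
  G.Adj v a ∧ G.Adj a b ∧ ¬G.Adj v b ∧ ¬G.Adj v c ∧ ¬G.Adj a c ∧ ¬G.Adj b c

/-- Two-edge path plus isolated vertex, `v` the middle vertex of the path. -/
noncomputable def F3' (v : V) : ℕ := cnt3 v fun a b c =>
  G.Adj v a ∧ G.Adj v b ∧ ¬G.Adj a b ∧ ¬G.Adj v c ∧ ¬G.Adj a c ∧ ¬G.Adj b c

/-- Path on four vertices, `v` an endpoint. -/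
noncomputable def F4 (v : V) : ℕ := cnt3 v fun a b c =>
  G.Adj v a ∧ G.Adj a b ∧ G.Adj b c ∧ ¬G.Adj v b ∧ ¬G.Adj v c ∧ ¬G.Adj a c

/-- Path on four vertices, `v` an internal (degree-2) vertex. -/
noncomputable def F4' (v : V) : ℕ := cnt3 v fun a b c =>
  G.Adj v a ∧ G.Adj v b ∧ G.Adj b c ∧ ¬G.Adj a b ∧ ¬G.Adj v c ∧ ¬G.Adj a c

/-- Triangle plus isolated vertex, `v` in the triangle. -/
noncomputable def F5 (v : V) : ℕ := cnt3 v fun a b c =>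
  G.Adj v a ∧ G.Adj v b ∧ G.Adj a b ∧ ¬G.Adj v c ∧ ¬G.Adj a c ∧ ¬G.Adj b c

/-- Star `K_{1,3}`, `v` a leaf. -/
noncomputable def F6 (v : V) : ℕ := cnt3 v fun a b c =>
  G.Adj v a ∧ G.Adj a b ∧ G.Adj a c ∧ ¬G.Adj v b ∧ ¬G.Adj v c ∧ ¬G.Adj b c

/-- Star `K_{1,3}`, `v` the center. -/
noncomputable def F6' (v : V) : ℕ := cnt3 v fun a b c =>
  G.Adj v a ∧ G.Adj v b ∧ G.Adj v c ∧ ¬G.Adj a b ∧ ¬G.Adj a c ∧ ¬G.Adj b c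

/-- 4-cycle. -/
noncomputable def F7 (v : V) : ℕ := cnt3 v fun a b c =>
  G.Adj v a ∧ G.Adj a b ∧ G.Adj b c ∧ G.Adj v c ∧ ¬G.Adj v b ∧ ¬G.Adj a c

/-- Paw (triangle with a pendant edge), `v` the pendant (degree-1) vertex. -/
noncomputable def F8 (v : V) : ℕ := cnt3 v fun a b c =>
  G.Adj v a ∧ G.Adj a b ∧ G.Adj a c ∧ G.Adj b c ∧ ¬G.Adj v b ∧ ¬G.Adj v c

/-- Paw, `v` the degree-3 vertex. -/
noncomputable def F8' (v : V) : ℕ := cnt3 v fun a b c =>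
  G.Adj v a ∧ G.Adj v b ∧ G.Adj a b ∧ G.Adj v c ∧ ¬G.Adj a c ∧ ¬G.Adj b c

/-- Paw, `v` one of the two degree-2 vertices. -/
noncomputable def F8'' (v : V) : ℕ := cnt3 v fun a b c =>
  G.Adj v a ∧ G.Adj v b ∧ G.Adj a b ∧ G.Adj a c ∧ ¬G.Adj v c ∧ ¬G.Adj b c

/-- Diamond (`K4` minus one edge), `v` one of the two degree-2 vertices. -/
noncomputable def F9 (v : V) : ℕ := cnt3 v fun a b c =>
  G.Adj v a ∧ G.Adj v b ∧ G.Adj a b ∧ G.Adj a c ∧ G.Adj b c ∧ ¬G.Adj v c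

/-- Diamond, `v` one of the two degree-3 vertices. -/
noncomputable def F9' (v : V) : ℕ := cnt3 v fun a b c =>
  G.Adj v a ∧ G.Adj v b ∧ G.Adj v c ∧ G.Adj a b ∧ G.Adj a c ∧ ¬G.Adj b c

/-- Complete graph `K4`. -/
noncomputable def F10 (v : V) : ℕ := cnt3 v fun a b c =>
  G.Adj v a ∧ G.Adj v b ∧ G.Adj v c ∧ G.Adj a b ∧ G.Adj a c ∧ G.Adj b c

/-- `|V \ (Γ(v) ∪ Γ(a))|`. -/
noncomputable def n1e (v a : V) : ℕ :=
  (Finset.univ.filter fun x => ¬G.Adj v x ∧ ¬G.Adj a x).card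

/-- `|Γ(v) \ (Γ(a) ∪ {a})|`. -/
noncomputable def n2c (v a : V) : ℕ :=
  (Finset.univ.filter fun x => G.Adj v x ∧ ¬G.Adj a x ∧ x ≠ a).card

/-- `|Γ(a) \ (Γ(v) ∪ {v})|`. -/
noncomputable def n2e (v a : V) : ℕ :=
  (Finset.univ.filter fun x => G.Adj a x ∧ ¬G.Adj v x ∧ x ≠ v).card

/-- `|Γ(v) ∩ Γ(a)|`. -/
noncomputable def n3 (v a : V) : ℕ :=
  (Finset.univ.filter fun x => G.Adj v x ∧ G.Adj a x).card

/-- Number of edges of `G` with neither endpoint in `Γ(v) ∪ {v}`. -/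
noncomputable def n1d (v : V) : ℕ :=
  (((Finset.univ : Finset V).powersetCard 2).filter
    (fun s => ∃ a ∈ s, ∃ b ∈ s, s = {a, b} ∧ G.Adj a b ∧
      ¬G.Adj v a ∧ ¬G.Adj v b ∧ a ≠ v ∧ b ≠ v)).card

/-- Number of triangles of `G` containing `a`. -/
noncomputable def tri (a : V) : ℕ :=
  (((Finset.univ : Finset V).powersetCard 2).filter
    (fun s => ∃ x ∈ s, ∃ y ∈ s, s = {x, y} ∧ G.Adj a x ∧ G.Adj a y ∧ G.Adj x y)).card

/-- Number of 2-element subsets `{x,y}` of `V \ {a}` inducing a two-edge path with `a`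
an endpoint. -/
noncomputable def twoPathEnd (a : V) : ℕ :=
  (((Finset.univ : Finset V).powersetCard 2).filter
    (fun s => a ∉ s ∧ ∃ x ∈ s, ∃ y ∈ s, s = {x, y} ∧ G.Adj a x ∧ G.Adj x y ∧ ¬G.Adj a y)).card

/-- Number of 2-element subsets `{b,c} ⊆ Γ(a)` with `b` adjacent to `c`, `b ∈ Γ(v)`,
`c ∈ Γ(v)`. -/
noncomputable def triIn (v a : V) : ℕ :=
  (((Finset.univ : Finset V).powersetCard 2).filter
    (fun s => ∃ b ∈ s, ∃ c ∈ s, s = {b, c} ∧ G.Adj a b ∧ G.Adj a c ∧ G.Adj b c ∧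
      G.Adj v b ∧ G.Adj v c)).card

/-- Number of 2-element subsets `{b,c} ⊆ Γ(a)` with `b` adjacent to `c`, `b ∉ Γ(v)`,
`c ∉ Γ(v)`. -/
noncomputable def triOut (v a : V) : ℕ :=
  (((Finset.univ : Finset V).powersetCard 2).filter
    (fun s => ∃ b ∈ s, ∃ c ∈ s, s = {b, c} ∧ G.Adj a b ∧ G.Adj a c ∧ G.Adj b c ∧
      ¬G.Adj v b ∧ ¬G.Adj v c)).card

private lemma card_pair_le {V : Type*} [DecidableEq V] (x y : V) :
    ({x, y} : Finset V).card ≤ 2 :=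
  (Finset.card_insert_le _ _).trans (by simp)

omit [Fintype V] in
private lemma triple_ne {a b c : V} (h : ({a, b, c} : Finset V).card = 3) :
    a ≠ b ∧ a ≠ c ∧ b ≠ c := by
  refine ⟨?_, ?_, ?_⟩ <;> rintro rfl
  · have h2 : ({a, a, c} : Finset V).card ≤ 2 :=
      (Finset.card_le_card (by intro x hx; simp at hx ⊢; tauto)).trans (card_pair_le a c)
    omega
  · have h2 : ({a, b, a} : Finset V).card ≤ 2 :=
      (Finset.card_le_card (by intro x hx; simp at hx ⊢; tauto)).trans (card_pair_le a b)
    omega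
  · have h2 : ({a, b, b} : Finset V).card ≤ 2 :=
      (Finset.card_le_card (by intro x hx; simp at hx ⊢; tauto)).trans (card_pair_le a b)
    omega

set_option maxHeartbeats 1600000 in
theorem statement11 [DecidableRel G.Adj] (v : V) :
    ∑ a ∈ G.neighborFinset v, Nat.choose (n2e G v a) 2 = F6 G v + F8 G v := by
  classical
  set S : V → Finset V := fun a =>
    Finset.univ.filter fun x => G.Adj a x ∧ ¬G.Adj v x ∧ x ≠ v with hS
  have hSmem : ∀ a x, x ∈ S a ↔ G.Adj a x ∧ ¬G.Adj v x ∧ x ≠ v := by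
    intro a x; simp [hS]
  have h1card : ∀ a, n2e G v a = (S a).card := by
    intro a
    delta n2e
    apply congrArg Finset.card
    ext x
    simp [hS]
  have h1 : ∀ a, Nat.choose (n2e G v a) 2 = ((S a).powersetCard 2).card := by
    intro a
    rw [Finset.card_powersetCard, h1card a]
  -- the two target sets
  set A := ((Finset.univ : Finset V).powersetCard 3).filter
    (fun s => v ∉ s ∧ ∃ a ∈ s, ∃ b ∈ s, ∃ c ∈ s, s = {a, b, c} ∧
      (G.Adj v a ∧ G.Adj a b ∧ G.Adj a c ∧ ¬G.Adj v b ∧ ¬G.Adj v c ∧ ¬G.Adj b c)) with hA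
  set B := ((Finset.univ : Finset V).powersetCard 3).filter
    (fun s => v ∉ s ∧ ∃ a ∈ s, ∃ b ∈ s, ∃ c ∈ s, s = {a, b, c} ∧
      (G.Adj v a ∧ G.Adj a b ∧ G.Adj a c ∧ G.Adj b c ∧ ¬G.Adj v b ∧ ¬G.Adj v c)) with hB
  have hF6 : F6 G v = A.card := by
    rw [hA]
    delta F6 cnt3
    apply congrArg Finset.card
    ext s
    simp only [Finset.mem_filter]
  have hF8 : F8 G v = B.card := by
    rw [hB]
    delta F8 cnt3
    apply congrArg Finset.card
    ext s
    simp only [Finset.mem_filter]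
  have hdisj : Disjoint A B := by
    rw [Finset.disjoint_left]
    intro t htA htB
    rw [hA, Finset.mem_filter, Finset.mem_powersetCard] at htA
    rw [hB, Finset.mem_filter, Finset.mem_powersetCard] at htB
    obtain ⟨⟨-, hcard⟩, -, a, ha, b, hb, c, hc, hteq, hva, hab, hac, hvb, hvc, hbc⟩ := htA
    obtain ⟨-, -, a', ha', b', hb', c', hc', hteq', hva', hab', hac', hbc', hvb', hvc'⟩ := htB
    have hmem : ∀ x ∈ t, x = a ∨ x = b ∨ x = c := by
      intro x hx; rw [hteq] at hx; simpa using hx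
    have hb'bc : b' = b ∨ b' = c := by
      rcases hmem b' hb' with h | h | h
      · exact absurd (h ▸ hva) hvb'
      · exact Or.inl h
      · exact Or.inr h
    have hc'bc : c' = b ∨ c' = c := by
      rcases hmem c' hc' with h | h | h
      · exact absurd (h ▸ hva) hvc'
      · exact Or.inl h
      · exact Or.inr h
    have hne' : b' ≠ c' := by
      have := triple_ne (a := a') (b := b') (c := c') (by rw [← hteq']; exact hcard)
      exact this.2.2
    rcases hb'bc with rfl | rfl <;> rcases hc'bc with rfl | rfl
    · exact hne' rfl
    · exact hbc hbc'
    · exact hbc hbc'.symm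
    · exact hne' rfl
  rw [hF6, hF8, ← Finset.card_union_of_disjoint hdisj]
  calc ∑ a ∈ G.neighborFinset v, Nat.choose (n2e G v a) 2
      = ∑ a ∈ G.neighborFinset v, ((S a).powersetCard 2).card :=
        Finset.sum_congr rfl fun a _ => h1 a
    _ = ((G.neighborFinset v).sigma fun a => (S a).powersetCard 2).card :=
        (Finset.card_sigma _ _).symm
    _ = (A ∪ B).card := by
        apply Finset.card_bij (fun p _ => insert p.1 p.2)
        · -- maps into A ∪ B
          rintro ⟨a, s⟩ hp
          rw [Finset.mem_sigma] at hp
          obtain ⟨haN, hs⟩ := hp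
          rw [Finset.mem_powersetCard] at hs
          obtain ⟨hsub, hcard2⟩ := hs
          obtain ⟨b, c, hbc, rfl⟩ := Finset.card_eq_two.mp hcard2
          have hva : G.Adj v a := (G.mem_neighborFinset v a).mp haN
          have hbS := (hSmem a b).mp (hsub (by simp))
          have hcS := (hSmem a c).mp (hsub (by simp))
          have hanb : a ∉ ({b, c} : Finset V) := by
            simp only [Finset.mem_insert, Finset.mem_singleton]
            rintro (rfl | rfl)
            · exact hbS.2.1 hva
            · exact hcS.2.1 hva
          have hcard3 : (insert a ({b, c} : Finset V)).card = 3 := by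
            rw [Finset.card_insert_of_notMem hanb, hcard2]
          have hvnot : v ∉ insert a ({b, c} : Finset V) := by
            simp only [Finset.mem_insert, Finset.mem_singleton]
            rintro (rfl | rfl | rfl)
            · exact G.irrefl hva
            · exact hbS.2.2 rfl
            · exact hcS.2.2 rfl
          rw [Finset.mem_union]
          by_cases hadjbc : G.Adj b c
          · right
            rw [hB, Finset.mem_filter, Finset.mem_powersetCard]
            exact ⟨⟨Finset.subset_univ _, hcard3⟩, hvnot, a, by simp, b, by simp, c, by simp,
              rfl, hva, hbS.1, hcS.1, hadjbc, hbS.2.1, hcS.2.1⟩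
          · left
            rw [hA, Finset.mem_filter, Finset.mem_powersetCard]
            exact ⟨⟨Finset.subset_univ _, hcard3⟩, hvnot, a, by simp, b, by simp, c, by simp,
              rfl, hva, hbS.1, hcS.1, hbS.2.1, hcS.2.1, hadjbc⟩
        · -- injective
          rintro ⟨a₁, s₁⟩ hp₁ ⟨a₂, s₂⟩ hp₂ heq
          rw [Finset.mem_sigma, Finset.mem_powersetCard] at hp₁ hp₂
          obtain ⟨ha₁, hs₁, -⟩ := hp₁
          obtain ⟨ha₂, hs₂, -⟩ := hp₂
          have hva₁ : G.Adj v a₁ := (G.mem_neighborFinset v a₁).mp ha₁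
          have hva₂ : G.Adj v a₂ := (G.mem_neighborFinset v a₂).mp ha₂
          have ha12 : a₁ = a₂ := by
            have : a₁ ∈ insert a₂ s₂ := heq ▸ Finset.mem_insert_self a₁ s₁
            rcases Finset.mem_insert.mp this with h | h
            · exact h
            · exact absurd hva₁ ((hSmem a₂ a₁).mp (hs₂ h)).2.1
          subst ha12
          have hna₁ : a₁ ∉ s₁ := fun h => ((hSmem a₁ a₁).mp (hs₁ h)).2.1 hva₁
          have hna₂ : a₁ ∉ s₂ := fun h => ((hSmem a₁ a₁).mp (hs₂ h)).2.1 hva₂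
          have : s₁ = s₂ := by
            rw [← Finset.erase_insert hna₁, ← Finset.erase_insert hna₂, heq]
          simp [this]
        · -- surjective
          intro t ht
          rw [Finset.mem_union] at ht
          have key : ∃ a b c, t = {a, b, c} ∧ t.card = 3 ∧ v ∉ t ∧ G.Adj v a ∧
              G.Adj a b ∧ G.Adj a c ∧ ¬G.Adj v b ∧ ¬G.Adj v c := by
            rcases ht with h | h
            · rw [hA, Finset.mem_filter, Finset.mem_powersetCard] at h
              obtain ⟨⟨-, h3⟩, hv, a, -, b, -, c, -, hteq, h1, h2, h3', h4, h5, -⟩ := h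
              exact ⟨a, b, c, hteq, h3, hv, h1, h2, h3', h4, h5⟩
            · rw [hB, Finset.mem_filter, Finset.mem_powersetCard] at h
              obtain ⟨⟨-, h3⟩, hv, a, -, b, -, c, -, hteq, h1, h2, h3', -, h4, h5⟩ := h
              exact ⟨a, b, c, hteq, h3, hv, h1, h2, h3', h4, h5⟩
          obtain ⟨a, b, c, hteq, h3, hv, hva, hab, hac, hvb, hvc⟩ := key
          have hne := triple_ne (a := a) (b := b) (c := c) (by rw [← hteq]; exact h3)
          have hbv : b ≠ v := fun h => hv (h ▸ (by rw [hteq]; simp))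
          have hcv : c ≠ v := fun h => hv (h ▸ (by rw [hteq]; simp))
          refine ⟨⟨a, {b, c}⟩, ?_, ?_⟩
          · rw [Finset.mem_sigma, Finset.mem_powersetCard]
            refine ⟨(G.mem_neighborFinset v a).mpr hva, ?_, ?_⟩
            · intro x hx
              rcases Finset.mem_insert.mp hx with rfl | hx
              · exact (hSmem a x).mpr ⟨hab, hvb, hbv⟩
              · rw [Finset.mem_singleton] at hx
                subst hx
                exact (hSmem a x).mpr ⟨hac, hvc, hcv⟩
            · rw [Finset.card_pair hne.2.2]
          · simp [hteq]

end FourProfiles
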